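/- Time-varying identification (weighting form) for T = 2: Let Z = (X₁, A₁, X₂, A₂, Y) with A₁, A₂ binary, H₁ = X₁, H₂ = (X₁, A₁, X₂), π_t(H_t) = P(A_t = 1 | H_t). Assume consistency (Y = Y^{A₁,A₂}) and sequential exchangeability (A_t ⟂ Y^{a₁,a₂} | H_t for t = 1,2). Then the mean counterfactual outcome under the intervention drawing A_t ~ Bernoulli(δπ_t(H_t)/(δπ_t(H_t)+1-π_t(H_t))) at each t equals E[ Y · ∏_{t=1}^{2} (δA_t + 1 - A_t)/(δπ_t(H_t) + 1 - π_t(H_t)) ]. -/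

import Mathlib

/-!
Write `wₜ = (δAₜ + 1 - Aₜ)/(δπₜ + 1 - πₜ)` and `qₜ = δπₜ/(δπₜ + 1 - πₜ)`. One period of the
identity reads: if `π` is the propensity score of a binary `A` given a σ-algebra `m`, and `r₁`,
`r₀` are regressions of a bounded `V` on `m` among the treated and the untreated, then
`E[G V w] = E[G (q r₁ + (1 - q) r₀)]` for every bounded `m`-measurable `G`. Indeed
`V w = δ/(δπ + 1 - π) · V A + 1/(δπ + 1 - π) · V (1 - A)`, and for `G' = G δ/(δπ + 1 - π)` the
tower property turns `E[G' V A]` into `E[G' r₁ A]` and then into `E[G' r₁ π]`; likewise for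
`1 - A`. Applying this to period 2 with `G = w₁`, a function of `H₂`, and then to period 1 with
`G = 1` and `V` the inner g-formula integrand gives the theorem.

The regressions are only pinned down on their own arm, so they need not be integrable; positivity
repairs this: where a regression exceeds the bound of `V` the arm has no mass, hence neither has
its propensity score, so `π r₁` and `(1 - π) r₀` stay bounded.
-/

open MeasureTheory ProbabilityTheory

section

variable {Ω : Type*} {m m0 : MeasurableSpace Ω} {P : Measure Ω}

theorem integral_mul_eq_of_forall_setIntegral_eq [IsFiniteMeasure P] (hm : m ≤ m0)
    {f f' g : Ω → ℝ} (hf : Integrable f P) (hf' : Integrable f' P)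
    (hg : StronglyMeasurable[m] g) (hgf : Integrable (g * f) P) (hgf' : Integrable (g * f') P)
    (hff' : ∀ s, MeasurableSet[m] s → ∫ x in s, f x ∂P = ∫ x in s, f' x ∂P) :
    ∫ x, g x * f x ∂P = ∫ x, g x * f' x ∂P := by
  have pull_out : ∀ h : Ω → ℝ, Integrable h P → Integrable (g * h) P →
      ∫ x, g x * h x ∂P = ∫ x, (g * P[h | m]) x ∂P := fun h hh hgh => by
    rw [← integral_condExp hm]
    exact integral_congr_ae (condExp_mul_of_stronglyMeasurable_left hg hgh hh)
  have hcondExp : P[f | m] =ᵐ[P] P[f' | m] :=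
    ae_eq_condExp_of_forall_setIntegral_eq hm hf'
      (fun _ _ _ => integrable_condExp.integrableOn)
      (fun s hs _ => by rw [setIntegral_condExp hm hf hs, hff' s hs])
      stronglyMeasurable_condExp.aestronglyMeasurable
  rw [pull_out f hf hgf, pull_out f' hf' hgf']
  exact integral_congr_ae ((Filter.EventuallyEq.refl _ g).mul hcondExp)

theorem ae_le_of_forall_setIntegral_eq [IsFiniteMeasure P] (hm : m ≤ m0) {f g : Ω → ℝ} {C : ℝ}
    (hf : Integrable f P) (hfC : ∀ᵐ x ∂P, f x ≤ C) (hg : StronglyMeasurable[m] g)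
    (hfg : ∀ s, MeasurableSet[m] s → ∫ x in s, f x ∂P = ∫ x in s, g x ∂P) :
    ∀ᵐ x ∂P, g x ≤ C := by
  -- `g` need not be integrable, so it is tested on the slices where it is bounded
  set s : ℕ → Set Ω := fun n => {x | C < g x ∧ g x ≤ C + n}
  have hs : ∀ n, MeasurableSet[m] (s n) := fun n =>
    (measurableSet_lt measurable_const hg.measurable).inter
      (measurableSet_le hg.measurable measurable_const)
  have hnull : ∀ n, P (s n) = 0 := by
    intro n
    have hpos : ∀ᵐ x ∂P.restrict (s n), 0 < g x - C ∧ |g x - C| ≤ n :=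
      (ae_restrict_iff' (hm _ (hs n))).2 (ae_of_all _ fun x hx => by
        obtain ⟨h1, h2⟩ := hx
        exact ⟨sub_pos.2 h1, abs_le.2 ⟨by linarith, by linarith⟩⟩)
    have hint : IntegrableOn (fun x => g x - C) (s n) P :=
      Measure.integrableOn_of_bounded (M := n) (measure_ne_top P _)
        ((hg.mono hm).measurable.sub measurable_const).aestronglyMeasurable
        (hpos.mono fun x hx => hx.2)
    have hgint : IntegrableOn g (s n) P :=
      (hint.add (integrableOn_const (C := C) (measure_ne_top P _))).congr_fun
        (fun x _ => sub_add_cancel (g x) C) (hm _ (hs n))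
    have hnonpos : ∫ x in s n, (g x - C) ∂P ≤ 0 := by
      rw [integral_sub hgint (integrableOn_const (measure_ne_top P _)), ← hfg _ (hs n),
        ← integral_sub hf.integrableOn (integrableOn_const (measure_ne_top P _))]
      exact integral_nonpos_of_ae (ae_restrict_of_ae (hfC.mono fun x hx => sub_nonpos.2 hx))
    by_contra hne
    have hsupp : Function.support (fun x => g x - C) ∩ s n = s n :=
      Set.inter_eq_right.2 fun x hx => (sub_pos.2 hx.1).ne'
    have := (setIntegral_pos_iff_support_of_nonneg_ae (hpos.mono fun x hx => hx.1.le) hint).2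
      (by rw [hsupp]; exact pos_iff_ne_zero.2 hne)
    linarith
  refine ae_iff.2 (measure_mono_null (fun x hx => ?_) (measure_iUnion_null hnull))
  obtain ⟨n, hn⟩ := exists_nat_ge (g x - C)
  exact Set.mem_iUnion.2 ⟨n, lt_of_not_ge hx, by linarith⟩

theorem ae_mem_Icc_of_forall_setIntegral_eq [IsFiniteMeasure P] (hm : m ≤ m0) {f g : Ω → ℝ}
    {a b : ℝ} (hf : Integrable f P) (hfab : ∀ᵐ x ∂P, f x ∈ Set.Icc a b)
    (hg : StronglyMeasurable[m] g)
    (hfg : ∀ s, MeasurableSet[m] s → ∫ x in s, f x ∂P = ∫ x in s, g x ∂P) :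
    ∀ᵐ x ∂P, g x ∈ Set.Icc a b := by
  have hle := ae_le_of_forall_setIntegral_eq hm hf (hfab.mono fun x hx => hx.2) hg hfg
  have hge := ae_le_of_forall_setIntegral_eq hm hf.neg (hfab.mono fun x hx => neg_le_neg hx.1)
    hg.neg fun s hs => by simp only [Pi.neg_apply, integral_neg, hfg s hs]
  filter_upwards [hle, hge] with x hle hge
  exact ⟨neg_le_neg_iff.1 hge, hle⟩

theorem mul_eq_indicator_of_binary {A : Ω → ℝ} (hAbin : ∀ x, A x = 0 ∨ A x = 1)
    (h : Ω → ℝ) : (fun x => h x * A x) = {x | A x = 1}.indicator h := by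
  ext x
  rcases hAbin x with hx | hx <;> simp [hx]

theorem integral_mul_eq_setIntegral_of_binary {A : Ω → ℝ} (hA : Measurable A)
    (hAbin : ∀ x, A x = 0 ∨ A x = 1) (h : Ω → ℝ) :
    ∫ x, h x * A x ∂P = ∫ x in {x | A x = 1}, h x ∂P := by
  rw [mul_eq_indicator_of_binary hAbin,
    integral_indicator (measurableSet_eq_fun hA measurable_const)]

theorem integrable_of_binary [IsFiniteMeasure P] {A : Ω → ℝ} (hA : Measurable A)
    (hAbin : ∀ x, A x = 0 ∨ A x = 1) : Integrable A P :=
  Integrable.of_bound hA.aestronglyMeasurable 1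
    (ae_of_all _ fun x => by rcases hAbin x with hx | hx <;> simp [hx])

theorem min_le_mul_add_one_sub {δ p : ℝ} (hp : p ∈ Set.Icc 0 1) : min δ 1 ≤ δ * p + 1 - p := by
  nlinarith [min_le_left δ 1, min_le_right δ 1, hp.1, hp.2]

theorem abs_div_mul_add_one_sub_le {δ p : ℝ} (hδ : 0 < δ) (hp : p ∈ Set.Icc 0 1) (c : ℝ) :
    |c / (δ * p + 1 - p)| ≤ |c| / min δ 1 := by
  have hmin : 0 < min δ 1 := lt_min hδ one_pos
  rw [abs_div, abs_of_pos (hmin.trans_le (min_le_mul_add_one_sub hp))]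
  exact div_le_div_of_nonneg_left (abs_nonneg c) hmin (min_le_mul_add_one_sub hp)

variable (m P) in
def IsPropensityScore (A π : Ω → ℝ) : Prop :=
  StronglyMeasurable[m] π ∧ ∀ s, MeasurableSet[m] s → ∫ x in s, A x ∂P = ∫ x in s, π x ∂P

variable (m P) in
def IsRegressionOn (B : Set Ω) (V r : Ω → ℝ) : Prop :=
  StronglyMeasurable[m] r ∧
    ∀ s, MeasurableSet[m] s → ∫ x in s ∩ B, V x ∂P = ∫ x in s ∩ B, r x ∂P

theorem IsRegressionOn.ae_restrict_abs_le [IsFiniteMeasure P] (hm : m ≤ m0) {B : Set Ω}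
    {V r : Ω → ℝ} {C : ℝ} (hV : Integrable V P) (hVC : ∀ᵐ x ∂P, |V x| ≤ C)
    (hr : IsRegressionOn m P B V r) : ∀ᵐ x ∂P.restrict B, |r x| ≤ C :=
  (ae_mem_Icc_of_forall_setIntegral_eq hm hV.restrict
    (ae_restrict_of_ae (hVC.mono fun x hx => abs_le.1 hx)) hr.1
    fun s hs => by simpa only [Measure.restrict_restrict (hm s hs)] using hr.2 s hs).mono
    fun x hx => abs_le.2 hx

namespace IsPropensityScore

variable [IsFiniteMeasure P] {A π V r r1 r0 : Ω → ℝ} {C δ : ℝ}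

theorem ae_mem_Icc (hm : m ≤ m0) (hA : Measurable A) (hAbin : ∀ x, A x = 0 ∨ A x = 1)
    (hπ : IsPropensityScore m P A π) : ∀ᵐ x ∂P, π x ∈ Set.Icc 0 1 :=
  ae_mem_Icc_of_forall_setIntegral_eq hm (integrable_of_binary hA hAbin)
    (ae_of_all _ fun x => by rcases hAbin x with hx | hx <;> simp [hx]) hπ.1 hπ.2

theorem integrable (hm : m ≤ m0) (hA : Measurable A) (hAbin : ∀ x, A x = 0 ∨ A x = 1)
    (hπ : IsPropensityScore m P A π) : Integrable π P :=
  Integrable.of_bound (hπ.1.mono hm).aestronglyMeasurable 1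
    ((hπ.ae_mem_Icc hm hA hAbin).mono fun x hx => by
      rw [Real.norm_eq_abs, abs_of_nonneg hx.1]; exact hx.2)

theorem one_sub (hm : m ≤ m0) (hA : Measurable A) (hAbin : ∀ x, A x = 0 ∨ A x = 1)
    (hπ : IsPropensityScore m P A π) :
    IsPropensityScore m P (fun x => 1 - A x) (fun x => 1 - π x) := by
  refine ⟨stronglyMeasurable_const.sub hπ.1, fun s hs => ?_⟩
  have hconst : IntegrableOn (fun _ => (1 : ℝ)) s P := integrableOn_const (measure_ne_top P _)
  rw [integral_sub hconst (integrable_of_binary hA hAbin).integrableOn,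
    integral_sub hconst (hπ.integrable hm hA hAbin).integrableOn, hπ.2 s hs]

theorem ae_abs_mul_le_mul (hm : m ≤ m0) (hA : Measurable A)
    (hAbin : ∀ x, A x = 0 ∨ A x = 1) (hπ : IsPropensityScore m P A π) (hV : Integrable V P)
    (hVC : ∀ᵐ x ∂P, |V x| ≤ C) (hr : IsRegressionOn m P {x | A x = 1} V r) :
    ∀ᵐ x ∂P, |π x * r x| ≤ π x * C := by
  set N := {x | C < |r x|}
  have hN : MeasurableSet[m] N :=
    measurableSet_lt measurable_const (measurable_abs.comp hr.1.measurable)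
  have hA0 : ∀ᵐ x ∂P, x ∈ N → A x = 0 := by
    filter_upwards [(ae_restrict_iff' (measurableSet_eq_fun hA measurable_const)).1
      (hr.ae_restrict_abs_le hm hV hVC)] with x hx hxN
    exact (hAbin x).resolve_right fun h => (hx h).not_gt hxN
  have hπN : ∫ x in N, π x ∂P = 0 := by
    rw [← hπ.2 N hN]
    exact integral_eq_zero_of_ae ((ae_restrict_iff' (hm N hN)).2 hA0)
  have hπ01 := hπ.ae_mem_Icc hm hA hAbin
  have hπ0 : π =ᵐ[P.restrict N] 0 :=
    (setIntegral_eq_zero_iff_of_nonneg_ae (ae_restrict_of_ae (hπ01.mono fun x hx => hx.1))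
      (hπ.integrable hm hA hAbin).integrableOn).1 hπN
  filter_upwards [(ae_restrict_iff' (hm N hN)).1 hπ0, hπ01] with x hx hπx
  by_cases hxN : x ∈ N
  · simp [hx hxN]
  · rw [abs_mul, abs_of_nonneg hπx.1, mul_comm, mul_comm _ C]
    exact mul_le_mul_of_nonneg_right (not_lt.1 hxN) hπx.1

theorem integrable_mul (hm : m ≤ m0) (hA : Measurable A)
    (hAbin : ∀ x, A x = 0 ∨ A x = 1) (hπ : IsPropensityScore m P A π) (hV : Integrable V P)
    (hVC : ∀ᵐ x ∂P, |V x| ≤ C) (hr : IsRegressionOn m P {x | A x = 1} V r) :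
    Integrable (fun x => π x * r x) P := by
  refine Integrable.of_bound ((hπ.1.mono hm).mul (hr.1.mono hm)).aestronglyMeasurable |C| ?_
  filter_upwards [hπ.ae_mem_Icc hm hA hAbin, hπ.ae_abs_mul_le_mul hm hA hAbin hV hVC hr]
    with x hx hxr
  calc ‖π x * r x‖ ≤ π x * C := hxr
    _ ≤ π x * |C| := mul_le_mul_of_nonneg_left (le_abs_self C) hx.1
    _ ≤ |C| := mul_le_of_le_one_left (abs_nonneg C) hx.2

theorem integral_mul_mul_eq (hm : m ≤ m0) (hA : Measurable A)
    (hAbin : ∀ x, A x = 0 ∨ A x = 1) (hπ : IsPropensityScore m P A π) (hV : Integrable V P)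
    (hVC : ∀ᵐ x ∂P, |V x| ≤ C) (hr : IsRegressionOn m P {x | A x = 1} V r) {G : Ω → ℝ}
    {K : ℝ} (hG : StronglyMeasurable[m] G) (hGK : ∀ᵐ x ∂P, |G x| ≤ K) :
    ∫ x, G x * (V x * A x) ∂P = ∫ x, G x * (π x * r x) ∂P := by
  have hB := measurableSet_eq_fun hA (measurable_const (a := (1 : ℝ)))
  have hGm : AEStronglyMeasurable G P := (hG.mono hm).aestronglyMeasurable
  have hr_int : IntegrableOn r {x | A x = 1} P :=
    Integrable.of_bound (hr.1.mono hm).aestronglyMeasurable.restrict C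
      (hr.ae_restrict_abs_le hm hV hVC)
  have hGr : IntegrableOn (G * r) {x | A x = 1} P :=
    hr_int.bdd_mul hGm.restrict (ae_restrict_of_ae hGK)
  calc ∫ x, G x * (V x * A x) ∂P = ∫ x in {x | A x = 1}, G x * V x ∂P := by
        simp only [← mul_assoc, integral_mul_eq_setIntegral_of_binary hA hAbin]
    _ = ∫ x in {x | A x = 1}, G x * r x ∂P := by
        refine integral_mul_eq_of_forall_setIntegral_eq hm hV.restrict hr_int hG ?_ hGr
          fun s hs => by simpa only [Measure.restrict_restrict (hm s hs)] using hr.2 s hs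
        exact Integrable.bdd_mul hV.restrict hGm.restrict (ae_restrict_of_ae hGK)
    _ = ∫ x, (G x * r x) * A x ∂P := (integral_mul_eq_setIntegral_of_binary hA hAbin _).symm
    _ = ∫ x, (G x * r x) * π x ∂P := by
        refine integral_mul_eq_of_forall_setIntegral_eq hm (integrable_of_binary hA hAbin)
          (hπ.integrable hm hA hAbin) (hG.mul hr.1) ?_ ?_ hπ.2
        · show Integrable (fun x => G x * r x * A x) P
          rw [mul_eq_indicator_of_binary hAbin]
          exact (integrable_indicator_iff hB).2 hGr
        · exact ((hπ.integrable_mul hm hA hAbin hV hVC hr).bdd_mul hGm hGK).congr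
            (ae_of_all _ fun x => by simp only [Pi.mul_apply]; ring)
    _ = ∫ x, G x * (π x * r x) ∂P := by simp only [mul_comm, mul_left_comm]

theorem ae_abs_mul_div_le (hm : m ≤ m0) (hA : Measurable A)
    (hAbin : ∀ x, A x = 0 ∨ A x = 1) (hπ : IsPropensityScore m P A π) {G : Ω → ℝ} {K : ℝ}
    (hGK : ∀ᵐ x ∂P, |G x| ≤ K) (hδ : 0 < δ) (c : ℝ) :
    ∀ᵐ x ∂P, |G x * (c / (δ * π x + 1 - π x))| ≤ K * (|c| / min δ 1) := by
  filter_upwards [hGK, hπ.ae_mem_Icc hm hA hAbin] with x hGx hx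
  rw [abs_mul]
  exact mul_le_mul hGx (abs_div_mul_add_one_sub_le hδ hx c) (abs_nonneg _)
    ((abs_nonneg _).trans hGx)

theorem ae_abs_incrementalWeight_le (hm : m ≤ m0) (hA : Measurable A)
    (hAbin : ∀ x, A x = 0 ∨ A x = 1) (hπ : IsPropensityScore m P A π) (hδ : 0 < δ) :
    ∀ᵐ x ∂P, |(δ * A x + 1 - A x) / (δ * π x + 1 - π x)| ≤ (δ + 1) / min δ 1 := by
  filter_upwards [hπ.ae_mem_Icc hm hA hAbin] with x hx
  refine (abs_div_mul_add_one_sub_le hδ hx _).trans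
    (div_le_div_of_nonneg_right ?_ (lt_min hδ one_pos).le)
  rcases hAbin x with h | h <;> simp [h, abs_of_pos hδ, hδ.le]

theorem ae_abs_gFormula_le (hm : m ≤ m0) (hA : Measurable A)
    (hAbin : ∀ x, A x = 0 ∨ A x = 1) (hπ : IsPropensityScore m P A π) (hV : Integrable V P)
    (hVC : ∀ᵐ x ∂P, |V x| ≤ C) (hr1 : IsRegressionOn m P {x | A x = 1} V r1)
    (hr0 : IsRegressionOn m P {x | A x = 0} V r0) (hδ : 0 < δ) :
    ∀ᵐ x ∂P, |δ * π x / (δ * π x + 1 - π x) * r1 x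
      + (1 - δ * π x / (δ * π x + 1 - π x)) * r0 x| ≤ C := by
  have hset : {x | 1 - A x = 1} = {x | A x = 0} := by ext; simp
  filter_upwards [hπ.ae_mem_Icc hm hA hAbin, hπ.ae_abs_mul_le_mul hm hA hAbin hV hVC hr1,
    (hπ.one_sub hm hA hAbin).ae_abs_mul_le_mul hm (hA.const_sub 1)
      (fun x => by rcases hAbin x with h | h <;> simp [h]) hV hVC (hset ▸ hr0)]
    with x hx h1 h0
  have hd : 0 < δ * π x + 1 - π x :=
    (lt_min hδ one_pos).trans_le (min_le_mul_add_one_sub hx)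
  have hcomb : δ * π x / (δ * π x + 1 - π x) * r1 x + (1 - δ * π x / (δ * π x + 1 - π x)) * r0 x
      = (δ * (π x * r1 x) + (1 - π x) * r0 x) / (δ * π x + 1 - π x) := by
    field_simp
    ring
  rw [hcomb, abs_div, abs_of_pos hd, div_le_iff₀ hd, mul_comm C]
  calc |δ * (π x * r1 x) + (1 - π x) * r0 x| ≤ δ * |π x * r1 x| + |(1 - π x) * r0 x| := by
        simpa [abs_mul, abs_of_pos hδ] using abs_add_le (δ * (π x * r1 x)) ((1 - π x) * r0 x)
    _ ≤ δ * (π x * C) + (1 - π x) * C := by gcongr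
    _ = (δ * π x + 1 - π x) * C := by ring

theorem integral_mul_incrementalWeight (hm : m ≤ m0) (hA : Measurable A)
    (hAbin : ∀ x, A x = 0 ∨ A x = 1) (hπ : IsPropensityScore m P A π) (hV : Integrable V P)
    (hVC : ∀ᵐ x ∂P, |V x| ≤ C) (hr1 : IsRegressionOn m P {x | A x = 1} V r1)
    (hr0 : IsRegressionOn m P {x | A x = 0} V r0) {G : Ω → ℝ} {K : ℝ}
    (hG : StronglyMeasurable[m] G) (hGK : ∀ᵐ x ∂P, |G x| ≤ K) (hδ : 0 < δ) :
    ∫ x, V x * ((δ * A x + 1 - A x) / (δ * π x + 1 - π x)) * G x ∂P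
      = ∫ x, (δ * π x / (δ * π x + 1 - π x) * r1 x
          + (1 - δ * π x / (δ * π x + 1 - π x)) * r0 x) * G x ∂P := by
  have hπ01 := hπ.ae_mem_Icc hm hA hAbin
  have hscaled : ∀ c : ℝ, StronglyMeasurable[m] (fun x => G x * (c / (δ * π x + 1 - π x))) ∧
      ∀ᵐ x ∂P, |G x * (c / (δ * π x + 1 - π x))| ≤ K * (|c| / min δ 1) := fun c =>
    ⟨hG.mul (stronglyMeasurable_const.div
      (((stronglyMeasurable_const.mul hπ.1).add stronglyMeasurable_const).sub hπ.1)),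
      hπ.ae_abs_mul_div_le hm hA hAbin hGK hδ c⟩
  have hAbin' : ∀ x, 1 - A x = 0 ∨ 1 - A x = 1 := fun x => by
    rcases hAbin x with h | h <;> simp [h]
  have hπ' := hπ.one_sub hm hA hAbin
  have hset : {x | 1 - A x = 1} = {x | A x = 0} := by ext; simp
  have hr0' : IsRegressionOn m P {x | 1 - A x = 1} V r0 := hset ▸ hr0
  have htreated := hπ.integral_mul_mul_eq hm hA hAbin hV hVC hr1 (hscaled δ).1 (hscaled δ).2
  have hcontrol := hπ'.integral_mul_mul_eq hm (hA.const_sub 1) hAbin' hV hVC hr0'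
    (hscaled 1).1 (hscaled 1).2
  beta_reduce at htreated hcontrol
  have hint : ∀ c : ℝ, ∀ f : Ω → ℝ, Integrable f P →
      Integrable (fun x => G x * (c / (δ * π x + 1 - π x)) * f x) P := fun c f hf =>
    hf.bdd_mul ((hscaled c).1.mono hm).aestronglyMeasurable
      ((hscaled c).2.mono fun x hx => hx)
  calc ∫ x, V x * ((δ * A x + 1 - A x) / (δ * π x + 1 - π x)) * G x ∂P
      = ∫ x, (G x * (δ / (δ * π x + 1 - π x)) * (V x * A x)
          + G x * (1 / (δ * π x + 1 - π x)) * (V x * (1 - A x))) ∂P := by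
        congr 1 with x
        ring
    _ = ∫ x, (G x * (δ / (δ * π x + 1 - π x)) * (π x * r1 x)
          + G x * (1 / (δ * π x + 1 - π x)) * ((1 - π x) * r0 x)) ∂P := by
        rw [integral_add (hint _ _ ((integrable_of_binary hA hAbin).bdd_mul hV.1 hVC))
            (hint _ _ ((integrable_of_binary (hA.const_sub 1) hAbin').bdd_mul hV.1 hVC)),
          integral_add (hint _ _ (hπ.integrable_mul hm hA hAbin hV hVC hr1))
            (hint _ _ (hπ'.integrable_mul hm (hA.const_sub 1) hAbin' hV hVC hr0')),
          htreated, hcontrol]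
    _ = _ := by
        refine integral_congr_ae (hπ01.mono fun x hx => ?_)
        have hd : δ * π x + 1 - π x ≠ 0 :=
          ((lt_min hδ one_pos).trans_le (min_le_mul_add_one_sub hx)).ne'
        field_simp
        ring

end IsPropensityScore

section Comap

variable {𝒯 : Type*} [MeasurableSpace 𝒯] {Z : Ω → 𝒯}

theorem isPropensityScore_comap {A : Ω → ℝ} {π : 𝒯 → ℝ} (hπ : Measurable π)
    (hAπ : ∀ S, MeasurableSet S → ∫ x in Z ⁻¹' S, A x ∂P = ∫ x in Z ⁻¹' S, π (Z x) ∂P) :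
    IsPropensityScore (.comap Z inferInstance) P A fun x => π (Z x) :=
  ⟨(hπ.comp (comap_measurable Z)).stronglyMeasurable, fun _ ⟨S, hS, hs⟩ => hs ▸ hAπ S hS⟩

theorem isRegressionOn_comap {B : Set Ω} {V : Ω → ℝ} {r : 𝒯 → ℝ} (hr : Measurable r)
    (hVr : ∀ S, MeasurableSet S →
      ∫ x in Z ⁻¹' S ∩ B, V x ∂P = ∫ x in Z ⁻¹' S ∩ B, r (Z x) ∂P) :
    IsRegressionOn (.comap Z inferInstance) P B V fun x => r (Z x) :=
  ⟨(hr.comp (comap_measurable Z)).stronglyMeasurable, fun _ ⟨S, hS, hs⟩ => hs ▸ hVr S hS⟩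

end Comap

end


theorem time_varying_incremental_identification_two_periods_general
    {Ω 𝒳₁ 𝒳₂ : Type*} [MeasurableSpace Ω]
    [MeasurableSpace 𝒳₁] [MeasurableSpace 𝒳₂]
    (P : Measure Ω) [IsProbabilityMeasure P]
    (X1 : Ω → 𝒳₁) (X2 : Ω → 𝒳₂) (A1 A2 Y : Ω → ℝ)
    (hX1 : Measurable X1)
    (hA1 : Measurable A1) (hA2 : Measurable A2) (hY : Measurable Y)
    (M : ℝ) (hYbd : ∀ ω, |Y ω| ≤ M)
    (hA1bin : ∀ ω, A1 ω = 0 ∨ A1 ω = 1) (hA2bin : ∀ ω, A2 ω = 0 ∨ A2 ω = 1)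
    -- histories H₁ = X₁ and H₂ = (X₁, A₁, X₂)
    (H2 : Ω → 𝒳₁ × ℝ × 𝒳₂) (hH2meas : Measurable H2)
    (hH2 : ∀ ω, H2 ω = (X1 ω, A1 ω, X2 ω))
    -- propensity scores πₜ(Hₜ) = P(Aₜ = 1 | Hₜ)
    (π1 : 𝒳₁ → ℝ) (hπ1meas : Measurable π1)
    (hπ1 : ∀ S : Set 𝒳₁, MeasurableSet S →
      ∫ ω in X1 ⁻¹' S, A1 ω ∂P = ∫ ω in X1 ⁻¹' S, π1 (X1 ω) ∂P)
    (π2 : 𝒳₁ × ℝ × 𝒳₂ → ℝ) (hπ2meas : Measurable π2)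
    (hπ2 : ∀ S : Set (𝒳₁ × ℝ × 𝒳₂), MeasurableSet S →
      ∫ ω in H2 ⁻¹' S, A2 ω ∂P = ∫ ω in H2 ⁻¹' S, π2 (H2 ω) ∂P)
    -- μ(h₂, a₂) = E[Y | H₂ = h₂, A₂ = a₂]
    (μ1 μ0 : 𝒳₁ × ℝ × 𝒳₂ → ℝ) (hμ1meas : Measurable μ1) (hμ0meas : Measurable μ0)
    (hμ1 : ∀ S : Set (𝒳₁ × ℝ × 𝒳₂), MeasurableSet S →
      ∫ ω in H2 ⁻¹' S ∩ {ω | A2 ω = 1}, Y ω ∂P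
        = ∫ ω in H2 ⁻¹' S ∩ {ω | A2 ω = 1}, μ1 (H2 ω) ∂P)
    (hμ0 : ∀ S : Set (𝒳₁ × ℝ × 𝒳₂), MeasurableSet S →
      ∫ ω in H2 ⁻¹' S ∩ {ω | A2 ω = 0}, Y ω ∂P
        = ∫ ω in H2 ⁻¹' S ∩ {ω | A2 ω = 0}, μ0 (H2 ω) ∂P)
    (δ : ℝ) (hδ : 0 < δ)
    -- m(h₁, a₁) = E[q₂ μ(H₂,1) + (1-q₂) μ(H₂,0) | H₁ = h₁, A₁ = a₁]
    (m1 m0 : 𝒳₁ → ℝ) (hm1meas : Measurable m1) (hm0meas : Measurable m0)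
    (hm1 : ∀ S : Set 𝒳₁, MeasurableSet S →
      ∫ ω in X1 ⁻¹' S ∩ {ω | A1 ω = 1},
          ((δ * π2 (H2 ω) / (δ * π2 (H2 ω) + 1 - π2 (H2 ω))) * μ1 (H2 ω)
            + (1 - δ * π2 (H2 ω) / (δ * π2 (H2 ω) + 1 - π2 (H2 ω))) * μ0 (H2 ω)) ∂P
        = ∫ ω in X1 ⁻¹' S ∩ {ω | A1 ω = 1}, m1 (X1 ω) ∂P)
    (hm0 : ∀ S : Set 𝒳₁, MeasurableSet S →
      ∫ ω in X1 ⁻¹' S ∩ {ω | A1 ω = 0},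
          ((δ * π2 (H2 ω) / (δ * π2 (H2 ω) + 1 - π2 (H2 ω))) * μ1 (H2 ω)
            + (1 - δ * π2 (H2 ω) / (δ * π2 (H2 ω) + 1 - π2 (H2 ω))) * μ0 (H2 ω)) ∂P
        = ∫ ω in X1 ⁻¹' S ∩ {ω | A1 ω = 0}, m0 (X1 ω) ∂P) :
    -- g-formula counterfactual mean = weighting representation
    ∫ ω, ((δ * π1 (X1 ω) / (δ * π1 (X1 ω) + 1 - π1 (X1 ω))) * m1 (X1 ω)
        + (1 - δ * π1 (X1 ω) / (δ * π1 (X1 ω) + 1 - π1 (X1 ω))) * m0 (X1 ω)) ∂P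
      = ∫ ω, Y ω * ((δ * A1 ω + 1 - A1 ω) / (δ * π1 (X1 ω) + 1 - π1 (X1 ω)))
                 * ((δ * A2 ω + 1 - A2 ω) / (δ * π2 (H2 ω) + 1 - π2 (H2 ω))) ∂P := by
  have hπ1' := isPropensityScore_comap (P := P) hπ1meas hπ1
  have hπ2' := isPropensityScore_comap (P := P) hπ2meas hπ2
  have hμ1' := isRegressionOn_comap hμ1meas hμ1
  have hμ0' := isRegressionOn_comap hμ0meas hμ0
  set Φ : Ω → ℝ := fun ω => δ * π2 (H2 ω) / (δ * π2 (H2 ω) + 1 - π2 (H2 ω)) * μ1 (H2 ω)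
    + (1 - δ * π2 (H2 ω) / (δ * π2 (H2 ω) + 1 - π2 (H2 ω))) * μ0 (H2 ω)
  have hm1' := isRegressionOn_comap hm1meas hm1
  have hm0' := isRegressionOn_comap hm0meas hm0
  have hYint : Integrable Y P := Integrable.of_bound hY.aestronglyMeasurable M (ae_of_all _ hYbd)
  have hw1 : StronglyMeasurable[.comap H2 inferInstance]
      fun ω => (δ * A1 ω + 1 - A1 ω) / (δ * π1 (X1 ω) + 1 - π1 (X1 ω)) := by
    have hw : Measurable fun h : 𝒳₁ × ℝ × 𝒳₂ =>
        (δ * h.2.1 + 1 - h.2.1) / (δ * π1 h.1 + 1 - π1 h.1) := by fun_prop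
    simpa [Function.comp_def, hH2] using (hw.comp (comap_measurable H2)).stronglyMeasurable
  have hΦbd : ∀ᵐ ω ∂P, |Φ ω| ≤ M :=
    hπ2'.ae_abs_gFormula_le hH2meas.comap_le hA2 hA2bin hYint (ae_of_all _ hYbd) hμ1' hμ0' hδ
  have hperiod2 := hπ2'.integral_mul_incrementalWeight hH2meas.comap_le hA2 hA2bin hYint
    (ae_of_all _ hYbd) hμ1' hμ0' hw1
    (hπ1'.ae_abs_incrementalWeight_le hX1.comap_le hA1 hA1bin hδ) hδ
  have hperiod1 := hπ1'.integral_mul_incrementalWeight hX1.comap_le hA1 hA1bin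
    (Integrable.of_bound (by fun_prop) M hΦbd) hΦbd hm1' hm0' stronglyMeasurable_const
    (ae_of_all _ fun _ => le_refl |(1 : ℝ)|) hδ
  simp only [mul_one] at hperiod1
  rw [← hperiod1, ← hperiod2]
  congr 1 with ω
  ring

/-- Time-varying identification (weighting form) for `T = 2`: with `H₁ = X₁`,
`H₂ = (X₁, A₁, X₂)`, `πₜ(Hₜ) = P(Aₜ = 1 | Hₜ)`, under consistency and sequential
exchangeability, the mean counterfactual outcome under the intervention drawing
`Aₜ ~ Bernoulli(δπₜ(Hₜ)/(δπₜ(Hₜ)+1-πₜ(Hₜ)))`, expressed via the g-formula as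
`ψ(δ) = E[q₁ m(H₁,1) + (1-q₁) m(H₁,0)]` with
`m(H₁,a₁) = E[q₂ μ(H₂,1) + (1-q₂) μ(H₂,0) | H₁, A₁ = a₁]` and
`μ(h₂,a₂) = E[Y | H₂ = h₂, A₂ = a₂]`, equals
`E[Y ∏ₜ (δAₜ + 1 - Aₜ)/(δπₜ(Hₜ) + 1 - πₜ(Hₜ))]`. -/
theorem time_varying_incremental_identification_two_periods
    {Ω 𝒳₁ 𝒳₂ : Type*} [MeasurableSpace Ω] [StandardBorelSpace Ω] [Nonempty Ω]
    [MeasurableSpace 𝒳₁] [MeasurableSpace 𝒳₂]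
    (P : Measure Ω) [IsProbabilityMeasure P]
    (X1 : Ω → 𝒳₁) (X2 : Ω → 𝒳₂) (A1 A2 Y : Ω → ℝ)
    (hX1 : Measurable X1) (hX2 : Measurable X2)
    (hA1 : Measurable A1) (hA2 : Measurable A2) (hY : Measurable Y)
    (M : ℝ) (hYbd : ∀ ω, |Y ω| ≤ M)
    (hA1bin : ∀ ω, A1 ω = 0 ∨ A1 ω = 1) (hA2bin : ∀ ω, A2 ω = 0 ∨ A2 ω = 1)
    -- histories H₁ = X₁ and H₂ = (X₁, A₁, X₂)
    (H2 : Ω → 𝒳₁ × ℝ × 𝒳₂) (hH2meas : Measurable H2)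
    (hH2 : ∀ ω, H2 ω = (X1 ω, A1 ω, X2 ω))
    -- potential outcomes Y^{a₁,a₂}
    (Ypot : ℝ → ℝ → Ω → ℝ)
    (hYpotInt : ∀ a1 a2 : ℝ, Integrable (Ypot a1 a2) P)
    -- consistency: Y = Y^{A₁,A₂}
    (hcons : ∀ ω, Y ω = Ypot (A1 ω) (A2 ω) ω)
    -- sequential exchangeability: Aₜ ⟂ Y^{a₁,a₂} | Hₜ for t = 1, 2
    (hexch1 : ∀ a1 a2 : ℝ, (a1 = 0 ∨ a1 = 1) → (a2 = 0 ∨ a2 = 1) →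
      CondIndepFun (MeasurableSpace.comap X1 inferInstance) hX1.comap_le
        A1 (Ypot a1 a2) P)
    (hexch2 : ∀ a1 a2 : ℝ, (a1 = 0 ∨ a1 = 1) → (a2 = 0 ∨ a2 = 1) →
      CondIndepFun (MeasurableSpace.comap H2 inferInstance)
        hH2meas.comap_le
        A2 (Ypot a1 a2) P)
    -- propensity scores πₜ(Hₜ) = P(Aₜ = 1 | Hₜ)
    (π1 : 𝒳₁ → ℝ) (hπ1meas : Measurable π1)
    (hπ1 : ∀ S : Set 𝒳₁, MeasurableSet S →
      ∫ ω in X1 ⁻¹' S, A1 ω ∂P = ∫ ω in X1 ⁻¹' S, π1 (X1 ω) ∂P)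
    (π2 : 𝒳₁ × ℝ × 𝒳₂ → ℝ) (hπ2meas : Measurable π2)
    (hπ2 : ∀ S : Set (𝒳₁ × ℝ × 𝒳₂), MeasurableSet S →
      ∫ ω in H2 ⁻¹' S, A2 ω ∂P = ∫ ω in H2 ⁻¹' S, π2 (H2 ω) ∂P)
    -- μ(h₂, a₂) = E[Y | H₂ = h₂, A₂ = a₂]
    (μ1 μ0 : 𝒳₁ × ℝ × 𝒳₂ → ℝ) (hμ1meas : Measurable μ1) (hμ0meas : Measurable μ0)
    (hμ1bd : ∀ h, |μ1 h| ≤ M) (hμ0bd : ∀ h, |μ0 h| ≤ M)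
    (hμ1 : ∀ S : Set (𝒳₁ × ℝ × 𝒳₂), MeasurableSet S →
      ∫ ω in H2 ⁻¹' S ∩ {ω | A2 ω = 1}, Y ω ∂P
        = ∫ ω in H2 ⁻¹' S ∩ {ω | A2 ω = 1}, μ1 (H2 ω) ∂P)
    (hμ0 : ∀ S : Set (𝒳₁ × ℝ × 𝒳₂), MeasurableSet S →
      ∫ ω in H2 ⁻¹' S ∩ {ω | A2 ω = 0}, Y ω ∂P
        = ∫ ω in H2 ⁻¹' S ∩ {ω | A2 ω = 0}, μ0 (H2 ω) ∂P)
    (δ : ℝ) (hδ : 0 < δ)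
    -- m(h₁, a₁) = E[q₂ μ(H₂,1) + (1-q₂) μ(H₂,0) | H₁ = h₁, A₁ = a₁]
    (m1 m0 : 𝒳₁ → ℝ) (hm1meas : Measurable m1) (hm0meas : Measurable m0)
    (hm1 : ∀ S : Set 𝒳₁, MeasurableSet S →
      ∫ ω in X1 ⁻¹' S ∩ {ω | A1 ω = 1},
          ((δ * π2 (H2 ω) / (δ * π2 (H2 ω) + 1 - π2 (H2 ω))) * μ1 (H2 ω)
            + (1 - δ * π2 (H2 ω) / (δ * π2 (H2 ω) + 1 - π2 (H2 ω))) * μ0 (H2 ω)) ∂P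
        = ∫ ω in X1 ⁻¹' S ∩ {ω | A1 ω = 1}, m1 (X1 ω) ∂P)
    (hm0 : ∀ S : Set 𝒳₁, MeasurableSet S →
      ∫ ω in X1 ⁻¹' S ∩ {ω | A1 ω = 0},
          ((δ * π2 (H2 ω) / (δ * π2 (H2 ω) + 1 - π2 (H2 ω))) * μ1 (H2 ω)
            + (1 - δ * π2 (H2 ω) / (δ * π2 (H2 ω) + 1 - π2 (H2 ω))) * μ0 (H2 ω)) ∂P
        = ∫ ω in X1 ⁻¹' S ∩ {ω | A1 ω = 0}, m0 (X1 ω) ∂P) :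
    -- g-formula counterfactual mean = weighting representation
    ∫ ω, ((δ * π1 (X1 ω) / (δ * π1 (X1 ω) + 1 - π1 (X1 ω))) * m1 (X1 ω)
        + (1 - δ * π1 (X1 ω) / (δ * π1 (X1 ω) + 1 - π1 (X1 ω))) * m0 (X1 ω)) ∂P
      = ∫ ω, Y ω * ((δ * A1 ω + 1 - A1 ω) / (δ * π1 (X1 ω) + 1 - π1 (X1 ω)))
                 * ((δ * A2 ω + 1 - A2 ω) / (δ * π2 (H2 ω) + 1 - π2 (H2 ω))) ∂P :=
  time_varying_incremental_identification_two_periods_general P X1 X2 A1 A2 Y hX1 hA1 hA2 hY M hYbd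
    hA1bin hA2bin H2 hH2meas hH2 π1 hπ1meas hπ1 π2 hπ2meas hπ2 μ1 μ0 hμ1meas hμ0meas hμ1 hμ0 δ hδ m1
    m0 hm1meas hm0meas hm1 hm0
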